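/- arXiv:1301.6994 — 4 statements merged into one kernel-verified Lean document; each statement's English description precedes it below -/
import Mathlib

section
/- There exist an integer s ≥ 0 and subsets ∅ = R_0 ⊊ R_1 ⊊ ⋯ ⊊ R_s ⊆ Q such that: (i) c(R_s) < u - b; (ii) 0 < ρ(R_0, R_1) < ρ(R_1, R_2) < ⋯ < ρ(R_{s-1}, R_s) ≤ (u - b - c(R_s)) / (2N - u + 2 + b - |R_s|); (iii) for every 1 ≤ i ≤ s and every subset R with R_{i-1} ⊊ R ⊆ Q and c(R_{i-1}) < c(R) < u - b, one has ρ(R_{i-1}, R_i) ≤ ρ(R_{i-1}, R); (iv) for every subset R with R_s ⊊ R ⊆ Q and c(R_s) < c(R) < u - b, one has ρ(R_s, R) ≥ (u - b - c(R_s)) / (2N - u + 2 + b - |R_s|). -/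
/-- The dimension of the linear span of the linear forms `H j`, `j ∈ K`. -/
noncomputable def cdim (q m : ℕ) (H : Fin q → Module.Dual ℂ (Fin (m + 1) → ℂ))
    (K : Finset (Fin q)) : ℕ :=
  Module.finrank ℂ (Submodule.span ℂ (H '' (K : Set (Fin q))))

/-- The quotient `ρ(R1, R2) = (c(R2) - c(R1)) / (|R2| - |R1|)`. -/
noncomputable def rho (q m : ℕ) (H : Fin q → Module.Dual ℂ (Fin (m + 1) → ℂ))
    (R1 R2 : Finset (Fin q)) : ℝ :=
  ((cdim q m H R2 : ℝ) - (cdim q m H R1 : ℝ)) / ((R2.card : ℝ) - (R1.card : ℝ))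

/-!
The chain is built greedily, in the spirit of a Harder–Narasimhan filtration: from `X = R i`,
among the admissible extensions `R'` (those with `c(X) < c(R') < u - b`) pick one of minimal slope
`ρ(X, R')`, and among those one of maximal size; stop as soon as no admissible extension has slope
below `τ(X) = (u - b - c(X)) / (2N - u + 2 + b - |X|)`. Both inequalities along the chain are
mediant inequalities: `ρ(X, Z)` is a mediant of `ρ(X, Y)` and `ρ(Y, Z)`, which together with the
tie-break towards maximal size makes the slopes strictly increase, and `τ(X)` is the slope from
`X` to the virtual point `(2N - u + 2 + b, u - b)`. The rank condition gives `|X| ≤ N` whenever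
`c(X) < u - b`, which keeps every set of the chain to the left of that point.
-/

theorem add_div_add_le_of_div_le {a b p r : ℝ} (hp : 0 < p) (hr : 0 < r) (h : b / r ≤ a / p) :
    (a + b) / (p + r) ≤ a / p := by
  rw [div_le_div_iff₀ hr hp] at h
  rw [div_le_div_iff₀ (add_pos hp hr) hp]
  nlinarith

namespace SlopeChain

variable {α : Type*} (c : Finset α → ℝ) (M D : ℝ)

noncomputable def slope (X Y : Finset α) : ℝ :=
  (c Y - c X) / ((Y.card : ℝ) - X.card)

noncomputable def threshold (X : Finset α) : ℝ :=
  (M - c X) / (D - X.card)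

def IsAdmissible (X Y : Finset α) : Prop :=
  X ⊂ Y ∧ c X < c Y ∧ c Y < M

structure IsGreedyStep (X Y : Finset α) : Prop where
  isAdmissible : IsAdmissible c M X Y
  slope_le : ∀ Z, IsAdmissible c M X Z → slope c X Y ≤ slope c X Z
  card_le : ∀ Z, IsAdmissible c M X Z → slope c X Z = slope c X Y → Z.card ≤ Y.card
  slope_lt_threshold : slope c X Y < threshold c M D X

def IsTerminal (X : Finset α) : Prop :=
  ∀ Z, IsAdmissible c M X Z → threshold c M D X ≤ slope c X Z

variable {c M D}

theorem card_sub_card_pos {X Y : Finset α} (h : X ⊂ Y) : 0 < (Y.card : ℝ) - X.card := by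
  have := Finset.card_lt_card h
  rw [sub_pos]
  exact_mod_cast this

theorem IsAdmissible.slope_pos {X Y : Finset α} (h : IsAdmissible c M X Y) : 0 < slope c X Y :=
  div_pos (sub_pos.2 h.2.1) (card_sub_card_pos h.1)

theorem IsAdmissible.trans {X Y Z : Finset α} (hXY : IsAdmissible c M X Y)
    (hYZ : IsAdmissible c M Y Z) : IsAdmissible c M X Z :=
  ⟨hXY.1.trans hYZ.1, hXY.2.1.trans hYZ.2.1, hYZ.2.2⟩

theorem slope_le_of_slope_le {X Y Z : Finset α} (hXY : X ⊂ Y) (hYZ : Y ⊂ Z)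
    (h : slope c Y Z ≤ slope c X Y) : slope c X Z ≤ slope c X Y := by
  have := add_div_add_le_of_div_le (card_sub_card_pos hXY) (card_sub_card_pos hYZ) h
  simp only [slope] at this ⊢
  convert this using 2 <;> ring

theorem IsGreedyStep.slope_lt {X Y Z : Finset α} (hXY : IsGreedyStep c M D X Y)
    (hYZ : IsGreedyStep c M D Y Z) : slope c X Y < slope c Y Z := by
  by_contra! h
  have hXZ := hXY.isAdmissible.trans hYZ.isAdmissible
  have hslope := le_antisymm (slope_le_of_slope_le hXY.isAdmissible.1 hYZ.isAdmissible.1 h)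
    (hXY.slope_le Z hXZ)
  have := hXY.card_le Z hXZ hslope
  have := Finset.card_lt_card hYZ.isAdmissible.1
  omega

theorem IsGreedyStep.slope_lt_threshold_right {X Y : Finset α} (h : IsGreedyStep c M D X Y)
    (hY : (Y.card : ℝ) < D) : slope c X Y < threshold c M D Y := by
  by_contra! hle
  have := add_div_add_le_of_div_le (card_sub_card_pos h.isAdmissible.1) (sub_pos.2 hY) hle
  refine h.slope_lt_threshold.not_ge (le_of_eq_of_le ?_ this)
  simp only [threshold]
  congr 1 <;> ring

theorem exists_isGreedyStep [Fintype α] {X : Finset α} (h : ¬ IsTerminal c M D X) :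
    ∃ Y, IsGreedyStep c M D X Y := by
  obtain ⟨W, hW, hWlt⟩ : ∃ W, IsAdmissible c M X W ∧ slope c X W < threshold c M D X := by
    simpa [IsTerminal] using h
  obtain ⟨Y₀, hY₀, hY₀min⟩ := Set.exists_min_image {Y | IsAdmissible c M X Y} (slope c X)
    (Set.toFinite _) ⟨W, hW⟩
  obtain ⟨Y, ⟨hY, hYY₀⟩, hYmax⟩ := Set.exists_max_image
    {Y | IsAdmissible c M X Y ∧ slope c X Y = slope c X Y₀} Finset.card (Set.toFinite _)
    ⟨Y₀, hY₀, rfl⟩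
  exact ⟨Y, hY, fun Z hZ => hYY₀ ▸ hY₀min Z hZ, fun Z hZ hZY => hYmax Z ⟨hZ, hZY.trans hYY₀⟩,
    hYY₀ ▸ (hY₀min W hW).trans_lt hWlt⟩

theorem exists_chain [Fintype α] (X : Finset α) :
    ∃ (s : ℕ) (R : Fin (s + 1) → Finset α), R 0 = X ∧
      (∀ i : Fin s, IsGreedyStep c M D (R i.castSucc) (R i.succ)) ∧
      IsTerminal c M D (R (Fin.last s)) := by
  by_cases hX : IsTerminal c M D X
  · exact ⟨0, fun _ => X, rfl, finZeroElim, hX⟩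
  obtain ⟨Y, hY⟩ := exists_isGreedyStep hX
  have : Fintype.card α - Y.card < Fintype.card α - X.card := by
    have := Finset.card_lt_card hY.isAdmissible.1
    have := Y.card_le_univ
    omega
  obtain ⟨s, R, hR0, hR, hlast⟩ := exists_chain Y
  refine ⟨s + 1, Fin.cons X R, rfl, Fin.cases ?_ fun i => ?_, hlast⟩
  · simpa [hR0] using hY
  · simpa [← Fin.succ_castSucc] using hR i
termination_by Fintype.card α - X.card

theorem strictMono_slope_of_isGreedyStep {s : ℕ} {R : Fin (s + 1) → Finset α}
    (hR : ∀ i : Fin s, IsGreedyStep c M D (R i.castSucc) (R i.succ)) :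
    StrictMono fun i : Fin s => slope c (R i.castSucc) (R i.succ) := by
  cases s with
  | zero => exact fun i => i.elim0
  | succ n =>
    exact Fin.strictMono_iff_lt_succ.2 fun i => by
      simpa only [Fin.succ_castSucc] using (hR i.castSucc).slope_lt (hR i.succ)

theorem slope_le_threshold_last {s : ℕ} {R : Fin (s + 1) → Finset α}
    (hR : ∀ i : Fin s, IsGreedyStep c M D (R i.castSucc) (R i.succ))
    (hD : ((R (Fin.last s)).card : ℝ) < D) (i : Fin s) :
    slope c (R i.castSucc) (R i.succ) ≤ threshold c M D (R (Fin.last s)) := by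
  cases s with
  | zero => exact i.elim0
  | succ n =>
    have hlast := (hR (Fin.last n)).slope_lt_threshold_right (by rwa [Fin.succ_last])
    rw [Fin.succ_last] at hlast
    exact ((strictMono_slope_of_isGreedyStep hR).monotone (Fin.le_last i)).trans hlast.le

theorem apply_last_lt_of_isGreedyStep {s : ℕ} {R : Fin (s + 1) → Finset α}
    (hR : ∀ i : Fin s, IsGreedyStep c M D (R i.castSucc) (R i.succ)) (h0 : c (R 0) < M) :
    c (R (Fin.last s)) < M := by
  cases s with
  | zero => exact h0
  | succ n => simpa only [Fin.succ_last] using (hR (Fin.last n)).isAdmissible.2.2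

end SlopeChain

section cdim

variable {q m : ℕ} (H : Fin q → Module.Dual ℂ (Fin (m + 1) → ℂ))

theorem cdim_mono {K L : Finset (Fin q)} (h : K ⊆ L) : cdim q m H K ≤ cdim q m H L :=
  Set.finrank_mono (Set.image_mono h)

theorem cdim_le_card (K : Finset (Fin q)) : cdim q m H K ≤ K.card := by
  classical
  rw [cdim, ← Finset.coe_image]
  exact (finrank_span_finset_le_card _).trans Finset.card_image_le

theorem cdim_empty : cdim q m H ∅ = 0 := by
  simp [cdim]

variable {N : ℕ} {u b : ℤ}
  (hrank : ∀ R : Finset (Fin q), R.card = N + 1 → u - b ≤ (cdim q m H R : ℤ))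
include hrank

theorem card_le_of_cdim_lt {X : Finset (Fin q)} (hX : (cdim q m H X : ℤ) < u - b) :
    X.card ≤ N := by
  by_contra! h
  obtain ⟨S, hSX, hS⟩ := Finset.exists_subset_card_eq h
  have := hrank S hS
  have := cdim_mono H hSX
  omega

theorem sub_le_succ_of_rank (hNq : N + 1 ≤ q) : u - b ≤ N + 1 := by
  obtain ⟨S, -, hS⟩ := Finset.exists_subset_card_eq (s := (Finset.univ : Finset (Fin q)))
    (n := N + 1) (by rwa [Finset.card_univ, Fintype.card_fin])
  have := hrank S hS
  have := cdim_le_card H S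
  omega

theorem card_lt_of_cdim_lt (hNq : N + 1 ≤ q) {X : Finset (Fin q)}
    (hX : (cdim q m H X : ℝ) < u - b) : (X.card : ℝ) < 2 * N - u + 2 + b := by
  have h₁ := card_le_of_cdim_lt H hrank (X := X) (by exact_mod_cast hX)
  have h₂ := sub_le_succ_of_rank H hrank hNq
  have : (X.card : ℤ) < 2 * N - u + 2 + b := by omega
  exact_mod_cast this

end cdim

open SlopeChain in
theorem stmt3_general (q m : ℕ) (H : Fin q → Module.Dual ℂ (Fin (m + 1) → ℂ))
    (N : ℕ) (hNq : N + 1 ≤ q)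
    (u b : ℤ) (hub : b < u)
    (hrank : ∀ R : Finset (Fin q), R.card = N + 1 → u - b ≤ (cdim q m H R : ℤ)) :
    ∃ (s : ℕ) (R : Fin (s + 1) → Finset (Fin q)),
      R 0 = ∅ ∧
      (∀ i : Fin s, R i.castSucc ⊂ R i.succ) ∧
      -- (i)
      (cdim q m H (R (Fin.last s)) : ℤ) < u - b ∧
      -- (ii)
      StrictMono (fun i : Fin s => rho q m H (R i.castSucc) (R i.succ)) ∧
      (∀ i : Fin s,
        0 < rho q m H (R i.castSucc) (R i.succ) ∧
        rho q m H (R i.castSucc) (R i.succ) ≤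
          ((u : ℝ) - (b : ℝ) - (cdim q m H (R (Fin.last s)) : ℝ)) /
            (2 * (N : ℝ) - (u : ℝ) + 2 + (b : ℝ) - ((R (Fin.last s)).card : ℝ))) ∧
      -- (iii)
      (∀ i : Fin s, ∀ R' : Finset (Fin q), R i.castSucc ⊂ R' →
        cdim q m H (R i.castSucc) < cdim q m H R' →
        (cdim q m H R' : ℤ) < u - b →
        rho q m H (R i.castSucc) (R i.succ) ≤ rho q m H (R i.castSucc) R') ∧
      -- (iv)
      (∀ R' : Finset (Fin q), R (Fin.last s) ⊂ R' →
        cdim q m H (R (Fin.last s)) < cdim q m H R' →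
        (cdim q m H R' : ℤ) < u - b →
        ((u : ℝ) - (b : ℝ) - (cdim q m H (R (Fin.last s)) : ℝ)) /
            (2 * (N : ℝ) - (u : ℝ) + 2 + (b : ℝ) - ((R (Fin.last s)).card : ℝ)) ≤
          rho q m H (R (Fin.last s)) R') := by
  obtain ⟨s, R, hR0, hR, hlast⟩ := exists_chain (c := fun K => (cdim q m H K : ℝ))
    (M := (u : ℝ) - b) (D := 2 * N - u + 2 + b) ∅
  have hc : (cdim q m H (R (Fin.last s)) : ℝ) < u - b :=
    apply_last_lt_of_isGreedyStep hR (by simpa [hR0, cdim_empty] using hub)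
  have hcast (K : Finset (Fin q)) (h : (cdim q m H K : ℤ) < u - b) :
      (cdim q m H K : ℝ) < u - b := by
    exact_mod_cast h
  refine ⟨s, R, hR0, fun i => (hR i).isAdmissible.1, by exact_mod_cast hc,
    strictMono_slope_of_isGreedyStep hR, fun i => ⟨(hR i).isAdmissible.slope_pos,
      slope_le_threshold_last hR (card_lt_of_cdim_lt H hrank hNq hc) i⟩, ?_, ?_⟩
  · exact fun i R' hR' hc' hcu => (hR i).slope_le R' ⟨hR', Nat.cast_lt.2 hc', hcast R' hcu⟩
  · exact fun R' hR' hc' hcu => hlast R' ⟨hR', Nat.cast_lt.2 hc', hcast R' hcu⟩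

theorem stmt3 (q m : ℕ) (hq : 0 < q)
    (H : Fin q → Module.Dual ℂ (Fin (m + 1) → ℂ))
    (N : ℕ) (hN : 0 < N) (hNq : N + 1 ≤ q)
    (u b : ℤ) (hb : -1 ≤ b) (hub : b < u)
    (hrank : ∀ R : Finset (Fin q), R.card = N + 1 → u - b ≤ (cdim q m H R : ℤ))
    (hq2 : 2 * (N : ℤ) - u + 2 + b ≤ (q : ℤ)) :
    ∃ (s : ℕ) (R : Fin (s + 1) → Finset (Fin q)),
      R 0 = ∅ ∧
      (∀ i : Fin s, R i.castSucc ⊂ R i.succ) ∧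
      -- (i)
      (cdim q m H (R (Fin.last s)) : ℤ) < u - b ∧
      -- (ii)
      StrictMono (fun i : Fin s => rho q m H (R i.castSucc) (R i.succ)) ∧
      (∀ i : Fin s,
        0 < rho q m H (R i.castSucc) (R i.succ) ∧
        rho q m H (R i.castSucc) (R i.succ) ≤
          ((u : ℝ) - (b : ℝ) - (cdim q m H (R (Fin.last s)) : ℝ)) /
            (2 * (N : ℝ) - (u : ℝ) + 2 + (b : ℝ) - ((R (Fin.last s)).card : ℝ))) ∧
      -- (iii)
      (∀ i : Fin s, ∀ R' : Finset (Fin q), R i.castSucc ⊂ R' →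
        cdim q m H (R i.castSucc) < cdim q m H R' →
        (cdim q m H R' : ℤ) < u - b →
        rho q m H (R i.castSucc) (R i.succ) ≤ rho q m H (R i.castSucc) R') ∧
      -- (iv)
      (∀ R' : Finset (Fin q), R (Fin.last s) ⊂ R' →
        cdim q m H (R (Fin.last s)) < cdim q m H R' →
        (cdim q m H R' : ℤ) < u - b →
        ((u : ℝ) - (b : ℝ) - (cdim q m H (R (Fin.last s)) : ℝ)) /
            (2 * (N : ℝ) - (u : ℝ) + 2 + (b : ℝ) - ((R (Fin.last s)).card : ℝ)) ≤
          rho q m H (R (Fin.last s)) R') :=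
  stmt3_general q m H N hNq u b hub hrank
end

section
/- Let ω(1), …, ω(q) be positive real numbers such that Σ_{j∈K} ω(j) ≤ (n - u + 2 + b)·c(K) for every subset K ⊆ Q with |K| ≤ N + 1. Then for all nonnegative real numbers E_1, …, E_q and every subset R ⊆ Q with |R| ≤ N + 1, there exist pairwise distinct indices j_1, …, j_{c(R)} ∈ R such that the linear span of {H_{j_1}, …, H_{j_{c(R)}}} equals the linear span of {H_j : j ∈ R} and Σ_{j∈R} ω(j)·E_j ≤ (n - u + 2 + b)·(E_{j_1} + ⋯ + E_{j_{c(R)}}). -/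
/-- `n + 1`, where `n = (max_{K ⊆ Q} c(K)) - 1`. -/
noncomputable def nDimSucc (q m : ℕ) (H : Fin q → Module.Dual ℂ (Fin (m + 1) → ℂ)) : ℕ :=
  Finset.univ.powerset.sup (cdim q m H)

/-!
Induction on `R`, removing an index `r` at which `E` is smallest. Write
`∑_R ω E = E r * ∑_R ω + ∑_{R \ {r}} ω (E - E r)`: the first term is at most `A c(R) E r`, and
the induction hypothesis for `R \ {r}` and the nonnegative weights `E - E r` bounds the second
by `A ∑_{J'} (E - E r)`, where `J'` spans `R \ {r}` and has `c(R \ {r})` elements. Adding `r`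
to `J'` exactly when `c(R) = c(R \ {r}) + 1` gives a spanning subset `J` of `R` with
`A c(R) E r + A ∑_{J'} (E - E r) = A ∑_J E`.
-/
open Module Submodule Finset

section

variable {𝕜 V ι : Type*} [Field 𝕜] [AddCommGroup V] [Module 𝕜 V] [DecidableEq ι] (H : ι → V)

instance finiteDimensional_span_image_finset (S : Finset ι) :
    FiniteDimensional 𝕜 (span 𝕜 (H '' (S : Set ι))) :=
  FiniteDimensional.span_of_finite 𝕜 (S.finite_toSet.image H)

lemma finrank_span_image_insert_le (r : ι) (S : Finset ι) :
    finrank 𝕜 (span 𝕜 (H '' ↑(insert r S))) ≤ finrank 𝕜 (span 𝕜 (H '' ↑S)) + 1 := by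
  rw [coe_insert, Set.image_insert_eq, span_insert, add_comm]
  refine (finrank_add_le_finrank_add_finrank _ _).trans (Nat.add_le_add_right ?_ _)
  simpa using finrank_span_le_card (R := 𝕜) {H r}

lemma exists_spanning_subset_insert {S J' : Finset ι} {r : ι} (hr : r ∉ S) (hJ'S : J' ⊆ S)
    (hcard : J'.card = finrank 𝕜 (span 𝕜 (H '' ↑S)))
    (hspan : span 𝕜 (H '' ↑J') = span 𝕜 (H '' ↑S)) :
    ∃ J ⊆ insert r S, J.card = finrank 𝕜 (span 𝕜 (H '' ↑(insert r S))) ∧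
      span 𝕜 (H '' ↑J) = span 𝕜 (H '' ↑(insert r S)) ∧
      ∀ E : ι → ℝ, ∑ l ∈ J, E l = ∑ l ∈ J', E l +
        ((finrank 𝕜 (span 𝕜 (H '' ↑(insert r S))) : ℝ) - finrank 𝕜 (span 𝕜 (H '' ↑S))) * E r := by
  have hle : span 𝕜 (H '' ↑S) ≤ span 𝕜 (H '' ↑(insert r S)) :=
    span_mono (Set.image_mono (by simp))
  by_cases hstable : finrank 𝕜 (span 𝕜 (H '' ↑(insert r S))) = finrank 𝕜 (span 𝕜 (H '' ↑S))
  · refine ⟨J', hJ'S.trans (subset_insert r S), hcard.trans hstable.symm, ?_, by simp [hstable]⟩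
    exact hspan.trans (eq_of_le_of_finrank_eq hle hstable.symm)
  · have hjump : finrank 𝕜 (span 𝕜 (H '' ↑(insert r S))) = finrank 𝕜 (span 𝕜 (H '' ↑S)) + 1 := by
      have := finrank_mono hle
      have := finrank_span_image_insert_le (𝕜 := 𝕜) H r S
      omega
    refine ⟨insert r J', insert_subset_insert r hJ'S, ?_, ?_, fun E => ?_⟩
    · rw [card_insert_of_notMem (fun h => hr (hJ'S h)), hcard, hjump]
    · simp only [coe_insert, Set.image_insert_eq, span_insert, hspan]
    · rw [sum_insert (fun h => hr (hJ'S h)), hjump]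
      push_cast
      ring

theorem exists_spanning_subset_sum_mul_le (ω : ι → ℝ) (A : ℝ) (R : Finset ι)
    (hω : ∀ K ⊆ R, ∑ l ∈ K, ω l ≤ A * finrank 𝕜 (span 𝕜 (H '' ↑K)))
    (E : ι → ℝ) (hE : ∀ l ∈ R, 0 ≤ E l) :
    ∃ J ⊆ R, J.card = finrank 𝕜 (span 𝕜 (H '' ↑R)) ∧ span 𝕜 (H '' ↑J) = span 𝕜 (H '' ↑R) ∧
      ∑ l ∈ R, ω l * E l ≤ A * ∑ l ∈ J, E l := by
  induction R using Finset.strongInduction generalizing E with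
  | H R ih =>
  rcases R.eq_empty_or_nonempty with rfl | hne
  · refine ⟨∅, subset_rfl, ?_, rfl, by simp⟩
    rw [card_empty, Finset.coe_empty, Set.image_empty, Submodule.span_empty, finrank_bot]
  obtain ⟨r, hrR, hmin⟩ := R.exists_min_image E hne
  obtain ⟨J', hJ'S, hcard, hspan, hsum⟩ := ih (R.erase r) (erase_ssubset hrR)
    (fun K hK => hω K (hK.trans (erase_subset r R))) (fun l => E l - E r)
    (fun l hl => sub_nonneg.2 (hmin l (mem_of_mem_erase hl)))
  obtain ⟨J, hJR, hJcard, hJspan, hJsum⟩ :=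
    exists_spanning_subset_insert H (notMem_erase r R) hJ'S hcard hspan
  rw [insert_erase hrR] at hJR hJcard hJspan hJsum
  refine ⟨J, hJR, hJcard, hJspan, ?_⟩
  calc ∑ l ∈ R, ω l * E l = E r * ∑ l ∈ R, ω l + ∑ l ∈ R.erase r, ω l * (E l - E r) := by
        rw [sum_erase _ (by simp), mul_sum, ← sum_add_distrib]
        exact sum_congr rfl fun l _ => by ring
    _ ≤ E r * (A * finrank 𝕜 (span 𝕜 (H '' ↑R))) + A * ∑ l ∈ J', (E l - E r) :=
        add_le_add (mul_le_mul_of_nonneg_left (hω R subset_rfl) (hE r hrR)) hsum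
    _ = A * ∑ l ∈ J, E l := by
        rw [hJsum, sum_sub_distrib, sum_const, hcard, nsmul_eq_mul]
        ring

end

theorem stmt5_general (q m : ℕ)
    (H : Fin q → Module.Dual ℂ (Fin (m + 1) → ℂ))
    (N : ℕ)
    (u b : ℤ)
    (ω : Fin q → ℝ)
    (hωsum : ∀ K : Finset (Fin q), K.card ≤ N + 1 →
      ∑ j ∈ K, ω j ≤
        (((nDimSucc q m H : ℝ) - 1) - (u : ℝ) + 2 + (b : ℝ)) * (cdim q m H K : ℝ))
    (E : Fin q → ℝ) (hE : ∀ j : Fin q, 0 ≤ E j)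
    (R : Finset (Fin q)) (hR : R.card ≤ N + 1) :
    ∃ j : Fin (cdim q m H R) → Fin q,
      Function.Injective j ∧ (∀ i, j i ∈ R) ∧
      Submodule.span ℂ (Set.range (H ∘ j)) = Submodule.span ℂ (H '' (R : Set (Fin q))) ∧
      ∑ l ∈ R, ω l * E l ≤
        (((nDimSucc q m H : ℝ) - 1) - (u : ℝ) + 2 + (b : ℝ)) * ∑ i, E (j i) := by
  obtain ⟨J, hJR, hJcard, hJspan, hsum⟩ := exists_spanning_subset_sum_mul_le H ω _ R
    (fun K hK => hωsum K ((card_le_card hK).trans hR)) E (fun l _ => hE l)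
  replace hJcard : J.card = cdim q m H R := hJcard
  refine ⟨J.orderEmbOfFin hJcard, (J.orderEmbOfFin hJcard).injective,
    fun i => hJR (J.orderEmbOfFin_mem hJcard i), ?_, ?_⟩
  · rwa [Set.range_comp, J.range_orderEmbOfFin]
  · rwa [← J.map_orderEmbOfFin_univ hJcard, sum_map] at hsum

theorem stmt5 (q m : ℕ) (hq : 0 < q)
    (H : Fin q → Module.Dual ℂ (Fin (m + 1) → ℂ))
    (N : ℕ) (hN : 0 < N) (hNq : N + 1 ≤ q)
    (u b : ℤ) (hb : -1 ≤ b) (hub : b < u)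
    (hrank : ∀ R : Finset (Fin q), R.card = N + 1 → u - b ≤ (cdim q m H R : ℤ))
    (ω : Fin q → ℝ) (hω : ∀ j : Fin q, 0 < ω j)
    (hωsum : ∀ K : Finset (Fin q), K.card ≤ N + 1 →
      ∑ j ∈ K, ω j ≤
        (((nDimSucc q m H : ℝ) - 1) - (u : ℝ) + 2 + (b : ℝ)) * (cdim q m H K : ℝ))
    (E : Fin q → ℝ) (hE : ∀ j : Fin q, 0 ≤ E j)
    (R : Finset (Fin q)) (hR : R.card ≤ N + 1) :
    ∃ j : Fin (cdim q m H R) → Fin q,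
      Function.Injective j ∧ (∀ i, j i ∈ R) ∧
      Submodule.span ℂ (Set.range (H ∘ j)) = Submodule.span ℂ (H '' (R : Set (Fin q))) ∧
      ∑ l ∈ R, ω l * E l ≤
        (((nDimSucc q m H : ℝ) - 1) - (u : ℝ) + 2 + (b : ℝ)) * ∑ i, E (j i) :=
  stmt5_general q m H N u b ω hωsum E hE R hR
end

section
/- Let E_0, …, E_m be real numbers with E_j > 1 for every 0 ≤ j ≤ m. Then there exist pairwise distinct indices j_1, …, j_k ∈ {0, …, m} such that the linear span of {H_{j_1}, …, H_{j_k}} has dimension k (i.e. H_{j_1}, …, H_{j_k} are linearly independent) and E_0·E_1⋯E_m ≤ (E_{j_1}·E_{j_2}⋯E_{j_k})^{m-k+2}. -/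
/-!
Let `E j₀` be the largest of the `E j`, and extend `{H j₀}` to a maximal linearly independent
subfamily `(H j)_{j ∈ s}`; it has `k` members. As all `E j ≥ 1` and `j₀ ∈ s`, every `E j` is at
most `P := ∏_{j ∈ s} E j`, so the `m + 1 - k` factors outside `s` contribute at most
`P ^ (m + 1 - k)`, and `∏ E ≤ P ^ (m + 2 - k)`.
-/

open Finset Module Submodule

theorem Finset.prod_le_prod_pow_of_mem_of_forall_le {ι : Type*} [Fintype ι] {E : ι → ℝ}
    (hE : ∀ i, 1 ≤ E i) {s : Finset ι} {i₀ : ι} (hi₀ : i₀ ∈ s) (hmax : ∀ i, E i ≤ E i₀) :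
    ∏ i, E i ≤ (∏ i ∈ s, E i) ^ (Fintype.card ι - #s + 1) := by
  classical
  set P := ∏ i ∈ s, E i
  have hE₀ : ∀ i, 0 ≤ E i := fun i => zero_le_one.trans (hE i)
  have hle_P : ∀ i, E i ≤ P := fun i =>
    calc E i ≤ E i₀ := hmax i
      _ = ∏ i ∈ {i₀}, E i := (prod_singleton E i₀).symm
      _ ≤ P := prod_le_prod_of_subset_of_one_le (singleton_subset_iff.2 hi₀)
        (fun i _ => hE₀ i) (fun i _ _ => hE i)
  have hcompl : ∏ i ∈ sᶜ, E i ≤ P ^ (Fintype.card ι - #s) := by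
    rw [← card_compl, ← prod_const]
    exact prod_le_prod (fun i _ => hE₀ i) (fun i _ => hle_P i)
  calc ∏ i, E i = P * ∏ i ∈ sᶜ, E i := (prod_mul_prod_compl s E).symm
    _ ≤ P * P ^ (Fintype.card ι - #s) := by gcongr; exact prod_nonneg fun i _ => hE₀ i
    _ = P ^ (Fintype.card ι - #s + 1) := (pow_succ' P _).symm

theorem exists_finset_mem_linearIndepOn_card_eq_finrank {K V ι : Type*} [DivisionRing K]
    [AddCommGroup V] [Module K V] [Fintype ι] {v : ι → V} {i₀ : ι} (hv : v i₀ ≠ 0) :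
    ∃ s : Finset ι, i₀ ∈ s ∧ LinearIndepOn K v (s : Set ι) ∧
      #s = finrank K (span K (Set.range v)) := by
  classical
  obtain ⟨b, -, hi₀b, hspan, hb⟩ := exists_linearIndepOn_extension
    ((linearIndepOn_singleton_iff K).2 hv) (Set.subset_univ {i₀})
  refine ⟨b.toFinset, by simpa using hi₀b, by simpa using hb, ?_⟩
  have hspan_eq : span K (v '' b) = span K (Set.range v) :=
    le_antisymm (span_mono (Set.image_subset_range v b))
      (span_le.2 (by simpa [Set.image_univ] using hspan))
  rw [← hspan_eq, Set.image_eq_range, finrank_span_eq_card hb, Set.toFinset_card]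

theorem stmt8_general (N m : ℕ)
    (H : Fin (m + 1) → Module.Dual ℂ (Fin (N + 1) → ℂ)) (hH : ∀ j, H j ≠ 0)
    (k : ℕ) (hk : k = Module.finrank ℂ (Submodule.span ℂ (Set.range H)))
    (E : Fin (m + 1) → ℝ) (hE : ∀ j, 1 < E j) :
    ∃ j : Fin k → Fin (m + 1),
      Function.Injective j ∧ LinearIndependent ℂ (H ∘ j) ∧
      ∏ l, E l ≤ (∏ i, E (j i)) ^ ((m : ℝ) - (k : ℝ) + 2) := by
  obtain ⟨j₀, -, hj₀⟩ := exists_max_image univ E univ_nonempty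
  obtain ⟨s, hj₀s, hind, hcard⟩ := exists_finset_mem_linearIndepOn_card_eq_finrank (K := ℂ) (hH j₀)
  rw [← hk] at hcard
  let e : Fin k ≃ s := (s.equivFinOfCardEq hcard).symm
  refine ⟨fun i => e i, Subtype.val_injective.comp e.injective, hind.comp e e.injective, ?_⟩
  have hprod : ∏ i, E (e i) = ∏ l ∈ s, E l := by
    rw [e.prod_comp (fun l : s => E l), prod_coe_sort s E]
  have hkm : k ≤ m + 1 := hcard ▸ (card_le_univ s).trans (Fintype.card_fin _).le
  calc ∏ l, E l ≤ (∏ l ∈ s, E l) ^ (Fintype.card (Fin (m + 1)) - #s + 1) :=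
        prod_le_prod_pow_of_mem_of_forall_le (fun j => (hE j).le) hj₀s fun j => hj₀ j (mem_univ j)
    _ = (∏ i, E (e i)) ^ ((m : ℝ) - (k : ℝ) + 2) := by
        rw [hprod, Fintype.card_fin, hcard, ← Real.rpow_natCast]
        push_cast [Nat.cast_sub hkm]
        ring_nf

theorem stmt8 (N m : ℕ) (hN : 0 < N) (hm : 0 < m)
    (H : Fin (m + 1) → Module.Dual ℂ (Fin (N + 1) → ℂ)) (hH : ∀ j, H j ≠ 0)
    (k : ℕ) (hk : k = Module.finrank ℂ (Submodule.span ℂ (Set.range H)))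
    (E : Fin (m + 1) → ℝ) (hE : ∀ j, 1 < E j) :
    ∃ j : Fin k → Fin (m + 1),
      Function.Injective j ∧ LinearIndependent ℂ (H ∘ j) ∧
      ∏ l, E l ≤ (∏ i, E (j i)) ^ ((m : ℝ) - (k : ℝ) + 2) :=
  stmt8_general N m H hH k hk E hE
end

section
/- Assume that for every choice of indices 1 ≤ i_0 < i_1 < ⋯ < i_t ≤ q the linear span of {H_{i_0}, …, H_{i_t}} has dimension at least u + 1, and let W be a nonzero linear subspace of ℂ^{m+1}. Then there exist m - u nonzero linear forms T_1, …, T_{m-u} on ℂ^{m+1} with the following properties: for every subset R ⊆ {1, …, q} with |R| = t + 1 and with the linear span of {H_j : j ∈ R} of dimension at least u + 1, the family {H_j : j ∈ R} ∪ {T_1, …, T_{m-u}} spans the full dual space of ℂ^{m+1} (equivalently, the intersection of the kernels of these t + 1 + m - u forms is {0}, i.e. the corresponding hyperplanes in ℂP^m are in (t + m - u)-subgeneral position); and W is not contained in the kernel of T_i for any 1 ≤ i ≤ m - u. -/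
/-!
A vector space over an infinite field is not a finite union of proper subspaces, so the forms
`T i` can be chosen one at a time, each outside the annihilator of `W` and outside every proper
subspace `span (H '' R) ⊔ span {T chosen so far}`. Each choice raises the dimension of every such
proper span by one, so after `m - u` choices every span of dimension at least `u + 1` is the whole
dual space, i.e. the corresponding kernels meet only in `0`.
-/

open Module Submodule

section Avoidance

variable {K E : Type*} [DivisionRing K] [Infinite K] [AddCommGroup E] [Module K E]

theorem Submodule.exists_forall_notMem_of_ne_top (s : Finset (Submodule K E)) :
    ∃ x : E, ∀ p ∈ s, p ≠ ⊤ → x ∉ p := by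
  have hcover := Subspace.biUnion_ne_univ_of_top_notMem (s := s.erase ⊤) (by simp)
  obtain ⟨x, hx⟩ := (Set.ne_univ_iff_exists_notMem _).mp hcover
  exact ⟨x, fun p hp hpt hxp => hx (Set.mem_biUnion (Finset.mem_erase.mpr ⟨hpt, hp⟩) hxp)⟩

theorem exists_forall_notMem_min_le_finrank_sup_span [FiniteDimensional K E] {ι : Type*}
    [Fintype ι] (P : ι → Submodule K E) {A : Submodule K E} (hA : A ≠ ⊤) (k : ℕ) :
    ∃ x : Fin k → E, (∀ i, x i ∉ A) ∧
      ∀ j, min (finrank K E) (finrank K (P j) + k) ≤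
        finrank K ↥(P j ⊔ span K (Set.range x)) := by
  classical
  induction k with
  | zero =>
    exact ⟨Fin.elim0, fun i => i.elim0, fun _ => min_le_of_right_le (finrank_mono le_sup_left)⟩
  | succ k ih =>
    obtain ⟨x, hxA, hx⟩ := ih
    obtain ⟨y, hy⟩ := exists_forall_notMem_of_ne_top
      (insert A (Finset.univ.image fun j => P j ⊔ span K (Set.range x)))
    refine ⟨Fin.cons y x, Fin.forall_fin_succ.mpr ⟨?_, ?_⟩, fun j => ?_⟩
    · simpa using hy A (by simp) hA
    · simpa using hxA
    have hsup_cons : P j ⊔ span K (Set.range (Fin.cons y x)) =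
        P j ⊔ span K (Set.range x) ⊔ K ∙ y := by
      rw [Fin.range_cons, span_insert, sup_left_comm, sup_comm]
    rw [hsup_cons]
    by_cases hsup_top : P j ⊔ span K (Set.range x) = ⊤
    · rw [hsup_top, top_sup_eq, finrank_top]
      exact min_le_left _ _
    · rw [finrank_sup_span_singleton (hy _ (by simp) hsup_top)]
      have := hx j
      omega

end Avoidance

theorem iInf_ker_inf_iInf_ker_eq_bot_of_span_sup_eq_top {K V ι κ : Type*} [Field K]
    [AddCommGroup V] [Module K V] {s : Set ι} {f : ι → Dual K V} {g : κ → Dual K V}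
    (h : span K (f '' s) ⊔ span K (Set.range g) = ⊤) :
    (⨅ j ∈ s, LinearMap.ker (f j)) ⊓ (⨅ i, LinearMap.ker (g i)) = ⊥ := by
  rw [eq_bot_iff, ← dualCoannihilator_top (R := K) (M := V), ← h, ← span_union]
  intro v hv
  rw [← SetLike.mem_coe, coe_dualCoannihilator_span]
  simp only [mem_inf, mem_iInf, LinearMap.mem_ker] at hv
  rintro _ (⟨j, hj, rfl⟩ | ⟨i, rfl⟩)
  exacts [hv.1 j hj, hv.2 i]

theorem stmt9_general (q m u t : ℕ)
    (H : Fin q → Module.Dual ℂ (Fin (m + 1) → ℂ))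
    (W : Submodule ℂ (Fin (m + 1) → ℂ)) (hW : W ≠ ⊥) :
    ∃ T : Fin (m - u) → Module.Dual ℂ (Fin (m + 1) → ℂ),
      (∀ i, T i ≠ 0) ∧
      (∀ R : Finset (Fin q), R.card = t + 1 →
        u + 1 ≤ Module.finrank ℂ (Submodule.span ℂ (H '' (R : Set (Fin q)))) →
        (⨅ j ∈ R, LinearMap.ker (H j)) ⊓ (⨅ i, LinearMap.ker (T i)) = ⊥) ∧
      (∀ i, ¬ W ≤ LinearMap.ker (T i)) := by
  obtain ⟨T, hTW, hT⟩ := exists_forall_notMem_min_le_finrank_sup_span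
    (fun R : Finset (Fin q) => span ℂ (H '' R)) (A := W.dualAnnihilator) (by simpa using hW)
    (m - u)
  have hdim : finrank ℂ (Dual ℂ (Fin (m + 1) → ℂ)) = m + 1 := by simp
  refine ⟨T, fun i hTi => hTW i (by simp [hTi]), fun R _ hR => ?_,
    fun i hle => hTW i ((mem_dualAnnihilator _).mpr hle)⟩
  apply iInf_ker_inf_iInf_ker_eq_bot_of_span_sup_eq_top
  apply eq_top_of_finrank_eq
  have := hT R
  have := finrank_le (span ℂ (H '' R) ⊔ span ℂ (Set.range T))
  omega

theorem stmt9 (q m u t : ℕ) (hq : 0 < q) (hm : 0 < m)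
    (hu1 : 1 ≤ u) (hum : u ≤ m) (ht : t ≤ q - 1)
    (H : Fin q → Module.Dual ℂ (Fin (m + 1) → ℂ)) (hH : ∀ j, H j ≠ 0)
    (hsub : ∀ S : Finset (Fin q), S.card = t + 1 →
      u + 1 ≤ Module.finrank ℂ (Submodule.span ℂ (H '' (S : Set (Fin q)))))
    (W : Submodule ℂ (Fin (m + 1) → ℂ)) (hW : W ≠ ⊥) :
    ∃ T : Fin (m - u) → Module.Dual ℂ (Fin (m + 1) → ℂ),
      (∀ i, T i ≠ 0) ∧
      (∀ R : Finset (Fin q), R.card = t + 1 →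
        u + 1 ≤ Module.finrank ℂ (Submodule.span ℂ (H '' (R : Set (Fin q)))) →
        (⨅ j ∈ R, LinearMap.ker (H j)) ⊓ (⨅ i, LinearMap.ker (T i)) = ⊥) ∧
      (∀ i, ¬ W ≤ LinearMap.ker (T i)) :=
  stmt9_general q m u t H W hW
end
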